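/- arXiv:1310.4477 — 2 statements merged into one kernel-verified Lean document; each statement's English description precedes it below -/
import Mathlib

section
/- Local quantum operations do not increase CCM: for every N-qubit state ρ and every local quantum operation ε = ε¹ ⊗ ⋯ ⊗ εᴺ (each εʲ given by single-qubit Kraus operators Eᵢʲ with Σᵢ (Eᵢʲ)† Eᵢʲ = 1), one has C(ε(ρ)) ≤ C(ρ). -/
open scoped BigOperators ComplexOrder Matrix

/-- Matrices representing operators on qubits indexed by `ι`. -/
abbrev QMat (ι : Type) : Type := Matrix (ι → Fin 2) (ι → Fin 2) ℂ

/-- A multi-qubit state: positive semidefinite with trace one. -/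
def IsState {ι : Type} [Fintype ι] [DecidableEq ι] (ρ : QMat ι) : Prop :=
  ρ.PosSemidef ∧ ρ.trace = 1

/-- Combine `u : A → Fin 2` with `w : Aᶜ → Fin 2` into a function on all qubits. -/
def glue {ι : Type} [Fintype ι] [DecidableEq ι] (A : Finset ι)
    (u : {x // x ∈ A} → Fin 2) (w : {x // x ∈ Aᶜ} → Fin 2) : ι → Fin 2 :=
  fun x => if h : x ∈ A then u ⟨x, h⟩ else w ⟨x, Finset.mem_compl.mpr h⟩

/-- The reduced matrix on the qubits in `A`, obtained by tracing out `Aᶜ`;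
`Tr_B ρ = reduceTo Bᶜ ρ`. -/
noncomputable def reduceTo {ι : Type} [Fintype ι] [DecidableEq ι] (A : Finset ι)
    (ρ : QMat ι) : QMat {x // x ∈ A} :=
  fun u v => ∑ w : {x // x ∈ Aᶜ} → Fin 2, ρ (glue A u w) (glue A v w)

/-- The Kronecker product of a state on `A` and a state on `Aᶜ`, with the tensor
factors placed back at their original qubit positions. -/
def boxProd {ι : Type} [Fintype ι] [DecidableEq ι] (A : Finset ι)
    (σ₁ : QMat {x // x ∈ A}) (σ₂ : QMat {x // x ∈ Aᶜ}) : QMat ι :=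
  fun x y =>
    σ₁ (fun a => x a.1) (fun a => y a.1) * σ₂ (fun b => x b.1) (fun b => y b.1)

/-- The cumulative correlation measure (CCM), defined recursively: it vanishes on
one-qubit states, and otherwise is the minimum over all bipartitions `(A, Aᶜ)` of
`2^(N-2) * D(ρ, ρ_A ⊠ ρ_{Aᶜ}) + C(ρ_A) + C(ρ_{Aᶜ})`. -/
noncomputable def CCM (D : ∀ (κ : Type) [Fintype κ] [DecidableEq κ], QMat κ → QMat κ → ℝ)
    (ι : Type) [Fintype ι] [DecidableEq ι] (ρ : QMat ι) : ℝ :=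
  if Fintype.card ι ≤ 1 then 0
  else
    sInf { r : ℝ |
      ∃ A : {A : Finset ι // A.Nonempty ∧ Aᶜ.Nonempty},
        r = (2 : ℝ) ^ (Fintype.card ι - 2) *
              D ι ρ (boxProd A.1 (reduceTo A.1 ρ) (reduceTo (A.1 : Finset ι)ᶜ ρ)) +
            CCM D {x // x ∈ A.1} (reduceTo A.1 ρ) +
            CCM D {x // x ∈ (A.1 : Finset ι)ᶜ} (reduceTo (A.1 : Finset ι)ᶜ ρ) }
termination_by Fintype.card ι
decreasing_by
  · have hA : (A.1 : Finset ι) ≠ Finset.univ := by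
      intro h
      rcases A.2.2 with ⟨x, hx⟩
      rw [h] at hx
      simp at hx
    calc Fintype.card {x // x ∈ A.1} = (A.1 : Finset ι).card := Fintype.card_coe _
      _ < Fintype.card ι := (Finset.card_lt_iff_ne_univ _).mpr hA
  · have hA : ((A.1 : Finset ι)ᶜ : Finset ι) ≠ Finset.univ :=
      (Finset.compl_ne_univ_iff_nonempty _).mpr A.2.1
    calc Fintype.card {x // x ∈ (A.1 : Finset ι)ᶜ} = ((A.1 : Finset ι)ᶜ).card :=
        Fintype.card_coe _
      _ < Fintype.card ι := (Finset.card_lt_iff_ne_univ _).mpr hA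
/-- The product Kraus operator `E_f = ⊗_j K j (f j)` acting on all qubits. -/
def krausProd {ι : Type} [Fintype ι] (m : ι → ℕ)
    (K : ∀ j : ι, Fin (m j) → Matrix (Fin 2) (Fin 2) ℂ) (f : ∀ j, Fin (m j)) :
    Matrix (ι → Fin 2) (ι → Fin 2) ℂ :=
  fun x y => ∏ j, K j (f j) (x j) (y j)

/-- The local quantum operation `ε = ε¹ ⊗ ⋯ ⊗ εᴺ` determined by single-qubit
Kraus operators `K j i` on each qubit `j`. -/
noncomputable def applyLocalKraus {ι : Type} [Fintype ι] [DecidableEq ι] (m : ι → ℕ)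
    (K : ∀ j : ι, Fin (m j) → Matrix (Fin 2) (Fin 2) ℂ) (ρ : QMat ι) : QMat ι :=
  ∑ f : ∀ j, Fin (m j), krausProd m K f * ρ * (krausProd m K f)ᴴ

/-- The axioms required of the distance `D`: nonnegativity and `D(ρ,ρ) = 0`,
invariance under unitary conjugation, contractivity under local quantum
operations, and monotonicity under partial traces. -/
structure DistanceAxioms
    (D : ∀ (κ : Type) [Fintype κ] [DecidableEq κ], QMat κ → QMat κ → ℝ) : Prop where
  nonneg : ∀ (ι : Type) [Fintype ι] [DecidableEq ι] (ρ σ : QMat ι),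
    IsState ρ → IsState σ → 0 ≤ D ι ρ σ
  self_eq_zero : ∀ (ι : Type) [Fintype ι] [DecidableEq ι] (ρ : QMat ι),
    IsState ρ → D ι ρ ρ = 0
  unitary_invariance : ∀ (ι : Type) [Fintype ι] [DecidableEq ι]
      (U : Matrix (ι → Fin 2) (ι → Fin 2) ℂ), U * Uᴴ = 1 → Uᴴ * U = 1 →
      ∀ ρ σ : QMat ι, IsState ρ → IsState σ →
        D ι (U * ρ * Uᴴ) (U * σ * Uᴴ) = D ι ρ σ
  contractivity : ∀ (ι : Type) [Fintype ι] [DecidableEq ι]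
      (m : ι → ℕ) (K : ∀ j : ι, Fin (m j) → Matrix (Fin 2) (Fin 2) ℂ),
      (∀ j, ∑ i, (K j i)ᴴ * K j i = 1) →
      ∀ ρ σ : QMat ι, IsState ρ → IsState σ →
        D ι (applyLocalKraus m K ρ) (applyLocalKraus m K σ) ≤ D ι ρ σ
  monotonicity : ∀ (ι : Type) [Fintype ι] [DecidableEq ι] (B : Finset ι)
      (ρ σ : QMat ι), IsState ρ → IsState σ →
        D {x // x ∈ Bᶜ} (reduceTo Bᶜ ρ) (reduceTo Bᶜ σ) ≤ D ι ρ σ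

/-- The Kronecker product of multi-qubit states, on the disjoint union of the
qubit index sets. -/
def kron {ι κ : Type} (φ : QMat ι) (ψ : QMat κ) : QMat (ι ⊕ κ) :=
  fun x y =>
    φ (fun i => x (Sum.inl i)) (fun i => y (Sum.inl i)) *
      ψ (fun j => x (Sum.inr j)) (fun j => y (Sum.inr j))

/-!
Partial traces commute with local operations, `Tr_B (ε ρ) = ε_A (Tr_B ρ)`: writing each product
Kraus operator as `(X ⊠ 1)(1 ⊠ Y)`, the factors on `A` pass through the partial trace and those
on `B` cancel by cyclicity of `Tr_B` and `∑ Y† Y = 1`. Local operations also map products to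
products, `ε (σ_A ⊠ σ_B) = ε_A σ_A ⊠ ε_B σ_B`. So for every bipartition the term of `C(ε ρ)` is
`2^(N-2) D(ε ρ, ε (ρ_A ⊠ ρ_B)) + C(ε_A ρ_A) + C(ε_B ρ_B)`, bounded termwise by the term of
`C(ρ)` through contractivity of `D` and induction on the number of qubits. The infimum over
bipartitions is a conditionally complete one in `ℝ`, so comparing infima needs the lower bound
`0`, from nonnegativity of `D` on states.
-/

open Matrix Kronecker

namespace Matrix

lemma trace_reindex {m n R : Type*} [Fintype m] [Fintype n] [AddCommMonoid R] (e : m ≃ n)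
    (M : Matrix m m R) : (reindex e e M).trace = M.trace :=
  e.symm.sum_comp fun i => M i i

variable {m n R : Type*} [Fintype n]

def traceRight [AddCommMonoid R] (M : Matrix (m × n) (m × n) R) : Matrix m m R :=
  of fun i j => ∑ k, M (i, k) (j, k)

lemma traceRight_apply [AddCommMonoid R] (M : Matrix (m × n) (m × n) R) (i j : m) :
    traceRight M i j = ∑ k, M (i, k) (j, k) := rfl

lemma traceRight_sum [AddCommMonoid R] {κ : Type*} (s : Finset κ)
    (M : κ → Matrix (m × n) (m × n) R) :
    traceRight (∑ c ∈ s, M c) = ∑ c ∈ s, traceRight (M c) := by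
  ext i j
  simp only [traceRight_apply, sum_apply]
  exact Finset.sum_comm

lemma trace_traceRight [AddCommMonoid R] [Fintype m] (M : Matrix (m × n) (m × n) R) :
    (traceRight M).trace = M.trace := by
  simp [trace, traceRight_apply, Fintype.sum_prod_type]

lemma PosSemidef.traceRight [CommRing R] [StarRing R] [PartialOrder R] [StarOrderedRing R]
    {M : Matrix (m × n) (m × n) R} (hM : M.PosSemidef) : M.traceRight.PosSemidef := by
  have : M.traceRight = ∑ k, M.submatrix (·, k) (·, k) := by
    ext i j
    simp [traceRight_apply, sum_apply]
  rw [this]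
  exact posSemidef_sum _ fun k _ => hM.submatrix _

variable [Fintype m] [CommSemiring R]

lemma traceRight_kronecker_one_mul_mul [DecidableEq n] (X Z : Matrix m m R)
    (M : Matrix (m × n) (m × n) R) :
    traceRight ((X ⊗ₖ (1 : Matrix n n R)) * M * (Z ⊗ₖ 1)) = X * traceRight M * Z := by
  ext i j
  simp only [traceRight_apply, mul_apply, kronecker_apply, one_apply, Fintype.sum_prod_type,
    mul_ite, ite_mul, mul_one, mul_zero, zero_mul, Finset.sum_ite_eq, Finset.mem_univ, if_true,
    Finset.sum_mul, Finset.mul_sum]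
  rw [Finset.sum_comm]
  refine Finset.sum_congr rfl fun x _ => ?_
  rw [Finset.sum_comm]
  simp [Finset.sum_comm (γ := n)]

lemma traceRight_one_kronecker_mul_comm [DecidableEq m] (Y : Matrix n n R)
    (M : Matrix (m × n) (m × n) R) :
    traceRight ((1 ⊗ₖ Y) * M) = traceRight (M * (1 ⊗ₖ Y)) := by
  ext i j
  simp only [traceRight_apply, mul_apply, kroneckerMap_apply, one_apply, ite_mul, one_mul,
    zero_mul, mul_comm (Y _ _), Fintype.sum_prod_type, Finset.sum_ite_irrel,
    Finset.sum_const_zero, Finset.sum_ite_eq, Finset.mem_univ, ↓reduceIte, mul_ite, mul_zero,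
    Finset.sum_ite_eq']
  exact Finset.sum_comm

end Matrix

section Bipartite

variable {ι : Type} [Fintype ι] [DecidableEq ι] (A : Finset ι)

def splitEquiv (β : ι → Type*) : ((∀ a : A, β a) × (∀ b : ↥Aᶜ, β b)) ≃ ∀ j, β j where
  toFun p j := if h : j ∈ A then p.1 ⟨j, h⟩ else p.2 ⟨j, Finset.mem_compl.mpr h⟩
  invFun f := (fun a => f a, fun b => f b)
  left_inv p := by
    ext a
    · simp [a.2]
    · simp [Finset.mem_compl.mp a.2]
  right_inv f := by
    ext j
    by_cases h : j ∈ A <;> simp [h]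

lemma splitEquiv_apply_of_mem (β : ι → Type*) (p : (∀ a : A, β a) × (∀ b : ↥Aᶜ, β b))
    (a : A) : splitEquiv A β p a = p.1 a := by
  simp [splitEquiv, a.2]

lemma splitEquiv_apply_of_mem_compl (β : ι → Type*) (p : (∀ a : A, β a) × (∀ b : ↥Aᶜ, β b))
    (b : ↥Aᶜ) : splitEquiv A β p b = p.2 b := by
  simp [splitEquiv, Finset.mem_compl.mp b.2]

lemma sum_splitEquiv (β : ι → Type*) [∀ j, Fintype (β j)] {M : Type*} [AddCommMonoid M]
    (F : (∀ j, β j) → M) :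
    ∑ f, F f = ∑ g : ∀ a : A, β a, ∑ g' : ∀ b : ↥Aᶜ, β b, F (splitEquiv A β (g, g')) := by
  rw [← (splitEquiv A β).sum_comp, Fintype.sum_prod_type]

-- `qubitSplit A (u, w)` unfolds to `glue A u w`, which makes the next two lemmas `rfl`.
abbrev qubitSplit : ((A → Fin 2) × (↥Aᶜ → Fin 2)) ≃ (ι → Fin 2) := splitEquiv A fun _ => Fin 2

lemma boxProd_eq_reindex_kronecker (σ₁ : QMat A) (σ₂ : QMat ↥Aᶜ) :
    boxProd A σ₁ σ₂ = reindexAlgEquiv ℂ ℂ (qubitSplit A) (σ₁ ⊗ₖ σ₂) := rfl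

lemma reduceTo_eq_traceRight (ρ : QMat ι) :
    reduceTo A ρ = traceRight ((reindexAlgEquiv ℂ ℂ (qubitSplit A)).symm ρ) := rfl

lemma boxProd_mul (X₁ Y₁ : QMat A) (X₂ Y₂ : QMat ↥Aᶜ) :
    boxProd A (X₁ * Y₁) (X₂ * Y₂) = boxProd A X₁ X₂ * boxProd A Y₁ Y₂ := by
  simp only [boxProd_eq_reindex_kronecker, mul_kronecker_mul, map_mul]

lemma boxProd_one : boxProd A 1 1 = 1 := by
  rw [boxProd_eq_reindex_kronecker, one_kronecker_one, map_one]

lemma conjTranspose_boxProd (X : QMat A) (Y : QMat ↥Aᶜ) :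
    (boxProd A X Y)ᴴ = boxProd A Xᴴ Yᴴ := by
  simp only [boxProd_eq_reindex_kronecker, coe_reindexAlgEquiv, conjTranspose_reindex,
    conjTranspose_kronecker]

lemma boxProd_sum_left {κ : Type*} (s : Finset κ) (X : κ → QMat A) (Y : QMat ↥Aᶜ) :
    boxProd A (∑ i ∈ s, X i) Y = ∑ i ∈ s, boxProd A (X i) Y := by
  ext x y
  simp only [boxProd, Matrix.sum_apply, Finset.sum_mul]

lemma boxProd_sum_right {κ : Type*} (s : Finset κ) (X : QMat A) (Y : κ → QMat ↥Aᶜ) :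
    boxProd A X (∑ j ∈ s, Y j) = ∑ j ∈ s, boxProd A X (Y j) := by
  ext x y
  simp only [boxProd, Matrix.sum_apply, Finset.mul_sum]

lemma isState_boxProd {σ₁ : QMat A} {σ₂ : QMat ↥Aᶜ} (h₁ : IsState σ₁) (h₂ : IsState σ₂) :
    IsState (boxProd A σ₁ σ₂) := by
  rw [boxProd_eq_reindex_kronecker, coe_reindexAlgEquiv]
  refine ⟨(h₁.1.kronecker h₂.1).submatrix _, ?_⟩
  rw [trace_reindex, trace_kronecker, h₁.2, h₂.2, one_mul]

lemma isState_reduceTo {ρ : QMat ι} (hρ : IsState ρ) : IsState (reduceTo A ρ) := by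
  rw [reduceTo_eq_traceRight, symm_reindexAlgEquiv, coe_reindexAlgEquiv]
  exact ⟨(hρ.1.submatrix _).traceRight, by rw [trace_traceRight, trace_reindex, hρ.2]⟩

lemma reduceTo_sum {κ : Type*} (s : Finset κ) (M : κ → QMat ι) :
    reduceTo A (∑ c ∈ s, M c) = ∑ c ∈ s, reduceTo A (M c) := by
  simp only [reduceTo_eq_traceRight, map_sum, traceRight_sum]

lemma reduceTo_boxProd_one_mul_mul (X Z : QMat A) (ρ : QMat ι) :
    reduceTo A (boxProd A X 1 * ρ * boxProd A Z 1) = X * reduceTo A ρ * Z := by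
  simp only [reduceTo_eq_traceRight, boxProd_eq_reindex_kronecker, map_mul,
    AlgEquiv.symm_apply_apply, traceRight_kronecker_one_mul_mul]

lemma reduceTo_one_boxProd_mul_comm (Y : QMat ↥Aᶜ) (ρ : QMat ι) :
    reduceTo A (boxProd A 1 Y * ρ) = reduceTo A (ρ * boxProd A 1 Y) := by
  simp only [reduceTo_eq_traceRight, boxProd_eq_reindex_kronecker, map_mul,
    AlgEquiv.symm_apply_apply, traceRight_one_kronecker_mul_comm]

end Bipartite

section LocalOperations

variable {ι : Type} [Fintype ι] [DecidableEq ι] (m : ι → ℕ)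
  (K : ∀ j : ι, Fin (m j) → Matrix (Fin 2) (Fin 2) ℂ)

lemma sum_conjTranspose_krausProd_mul_self (hK : ∀ j, ∑ i, (K j i)ᴴ * K j i = 1) :
    ∑ f, (krausProd m K f)ᴴ * krausProd m K f = 1 := by
  have hentry : ∀ f x y, ((krausProd m K f)ᴴ * krausProd m K f) x y
      = ∏ j, ((K j (f j))ᴴ * K j (f j)) (x j) (y j) := by
    intro f x y
    simp only [mul_apply, conjTranspose_apply, krausProd, star_prod, ← Finset.prod_mul_distrib]
    exact (Fintype.prod_sum fun j c => star (K j (f j) c (x j)) * K j (f j) c (y j)).symm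
  ext x y
  simp only [Matrix.sum_apply, hentry]
  rw [← Fintype.prod_sum fun j i => ((K j i)ᴴ * K j i) (x j) (y j)]
  simp only [← Matrix.sum_apply, hK, one_apply, Finset.prod_boole, funext_iff, Finset.mem_univ,
    true_implies]

lemma isState_applyLocalKraus (hK : ∀ j, ∑ i, (K j i)ᴴ * K j i = 1) {ρ : QMat ι}
    (hρ : IsState ρ) : IsState (applyLocalKraus m K ρ) := by
  refine ⟨posSemidef_sum _ fun f _ => hρ.1.mul_mul_conjTranspose_same _, ?_⟩
  calc (applyLocalKraus m K ρ).trace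
      = ((∑ f, (krausProd m K f)ᴴ * krausProd m K f) * ρ).trace := by
        simp only [applyLocalKraus, trace_sum, Finset.sum_mul, trace_mul_cycle _ ρ]
    _ = 1 := by rw [sum_conjTranspose_krausProd_mul_self m K hK, one_mul, hρ.2]

variable (A : Finset ι)

lemma krausProd_splitEquiv (g : ∀ a : A, Fin (m a)) (g' : ∀ b : ↥Aᶜ, Fin (m b)) :
    krausProd m K (splitEquiv A (fun j => Fin (m j)) (g, g'))
      = boxProd A (krausProd (fun a : A => m a) (fun a => K a) g)
          (krausProd (fun b : ↥Aᶜ => m b) (fun b => K b) g') := by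
  ext x y
  simp only [krausProd, boxProd]
  rw [← Finset.prod_mul_prod_compl A, ← Finset.prod_coe_sort A, ← Finset.prod_coe_sort Aᶜ]
  simp only [splitEquiv_apply_of_mem, splitEquiv_apply_of_mem_compl]

lemma applyLocalKraus_boxProd (σ₁ : QMat A) (σ₂ : QMat ↥Aᶜ) :
    applyLocalKraus m K (boxProd A σ₁ σ₂)
      = boxProd A (applyLocalKraus (fun a : A => m a) (fun a => K a) σ₁)
          (applyLocalKraus (fun b : ↥Aᶜ => m b) (fun b => K b) σ₂) := by
  rw [applyLocalKraus, applyLocalKraus, applyLocalKraus, boxProd_sum_left]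
  simp only [boxProd_sum_right, sum_splitEquiv A (fun j => Fin (m j)), krausProd_splitEquiv,
    conjTranspose_boxProd, ← boxProd_mul]

lemma reduceTo_applyLocalKraus (hK : ∀ j, ∑ i, (K j i)ᴴ * K j i = 1) (ρ : QMat ι) :
    reduceTo A (applyLocalKraus m K ρ)
      = applyLocalKraus (fun a : A => m a) (fun a => K a) (reduceTo A ρ) := by
  let X := krausProd (fun a : A => m a) (fun a => K a)
  let Y := krausProd (fun b : ↥Aᶜ => m b) (fun b => K b)
  have hterm : ∀ g g', reduceTo A (krausProd m K (splitEquiv A _ (g, g')) * ρ *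
      (krausProd m K (splitEquiv A _ (g, g')))ᴴ)
        = X g * reduceTo A (ρ * boxProd A 1 ((Y g')ᴴ * Y g')) * (X g)ᴴ := by
    intro g g'
    have hfactor : krausProd m K (splitEquiv A _ (g, g'))
        = boxProd A (X g) 1 * boxProd A 1 (Y g') := by
      rw [krausProd_splitEquiv, ← boxProd_mul, mul_one, one_mul]
    rw [hfactor, conjTranspose_mul, conjTranspose_boxProd, conjTranspose_boxProd,
      conjTranspose_one, conjTranspose_one,
      show boxProd A (X g) 1 * boxProd A 1 (Y g') * ρ * (boxProd A 1 (Y g')ᴴ * boxProd A (X g)ᴴ 1)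
        = boxProd A (X g) 1 * (boxProd A 1 (Y g') * (ρ * boxProd A 1 (Y g')ᴴ)) *
            boxProd A (X g)ᴴ 1 by simp only [mul_assoc],
      reduceTo_boxProd_one_mul_mul, reduceTo_one_boxProd_mul_comm, mul_assoc ρ, ← boxProd_mul,
      one_mul]
  have hsum : ∑ g', boxProd A 1 ((Y g')ᴴ * Y g') = 1 := by
    rw [← boxProd_sum_right, show ∑ g', (Y g')ᴴ * Y g' = 1 from
      sum_conjTranspose_krausProd_mul_self _ _ fun b => hK b, boxProd_one]
  rw [applyLocalKraus, sum_splitEquiv A (fun j => Fin (m j)), reduceTo_sum]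
  simp only [reduceTo_sum, hterm]
  simp only [← Finset.sum_mul, ← Finset.mul_sum, ← reduceTo_sum, hsum, mul_one]
  rfl

end LocalOperations

section Bipartitions

variable (D : ∀ (κ : Type) [Fintype κ] [DecidableEq κ], QMat κ → QMat κ → ℝ)
  {ι : Type} [Fintype ι] [DecidableEq ι]

abbrev Bipartition (ι : Type) [Fintype ι] [DecidableEq ι] : Type :=
  {A : Finset ι // A.Nonempty ∧ Aᶜ.Nonempty}

lemma Bipartition.card_lt (A : Bipartition ι) : Fintype.card A.1 < Fintype.card ι := by
  rw [Fintype.card_coe, ← compl_compl A.1]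
  exact (Finset.card_compl_lt_iff_nonempty _).mpr A.2.2

lemma Bipartition.card_compl_lt (A : Bipartition ι) : Fintype.card ↥A.1ᶜ < Fintype.card ι := by
  rw [Fintype.card_coe]
  exact (Finset.card_compl_lt_iff_nonempty _).mpr A.2.1

noncomputable def bipartitionCost (ρ : QMat ι) (A : Finset ι) : ℝ :=
  2 ^ (Fintype.card ι - 2) * D ι ρ (boxProd A (reduceTo A ρ) (reduceTo Aᶜ ρ)) +
    CCM D A (reduceTo A ρ) + CCM D ↥Aᶜ (reduceTo Aᶜ ρ)

lemma CCM_of_card_le_one (ρ : QMat ι) (h : Fintype.card ι ≤ 1) : CCM D ι ρ = 0 := by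
  rw [CCM, if_pos h]

lemma CCM_eq_iInf (ρ : QMat ι) (h : ¬Fintype.card ι ≤ 1) :
    CCM D ι ρ = ⨅ A : Bipartition ι, bipartitionCost D ρ A.1 := by
  rw [CCM, if_neg h]
  congr 1
  ext r
  exact exists_congr fun A => eq_comm

end Bipartitions

section Monotonicity

variable {D : ∀ (κ : Type) [Fintype κ] [DecidableEq κ], QMat κ → QMat κ → ℝ}

theorem CCM_nonneg (hD : DistanceAxioms D) {ι : Type} [Fintype ι] [DecidableEq ι]
    {ρ : QMat ι} (hρ : IsState ρ) : 0 ≤ CCM D ι ρ := by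
  by_cases h : Fintype.card ι ≤ 1
  · rw [CCM_of_card_le_one D ρ h]
  rw [CCM_eq_iInf D ρ h]
  refine Real.iInf_nonneg fun A => ?_
  have hA := isState_reduceTo A.1 hρ
  have hAc := isState_reduceTo A.1ᶜ hρ
  have := hD.nonneg ι _ _ hρ (isState_boxProd A.1 hA hAc)
  have := CCM_nonneg hD hA
  have := CCM_nonneg hD hAc
  unfold bipartitionCost
  positivity
termination_by Fintype.card ι
decreasing_by exacts [A.card_lt, A.card_compl_lt]

lemma bipartitionCost_nonneg (hD : DistanceAxioms D) {ι : Type} [Fintype ι] [DecidableEq ι]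
    {ρ : QMat ι} (hρ : IsState ρ) (A : Finset ι) : 0 ≤ bipartitionCost D ρ A := by
  have hA := isState_reduceTo A hρ
  have hAc := isState_reduceTo Aᶜ hρ
  have := hD.nonneg ι _ _ hρ (isState_boxProd A hA hAc)
  have := CCM_nonneg hD hA
  have := CCM_nonneg hD hAc
  unfold bipartitionCost
  positivity

theorem CCM_applyLocalKraus_le (hD : DistanceAxioms D) {ι : Type} [Fintype ι] [DecidableEq ι]
    (m : ι → ℕ) (K : ∀ j : ι, Fin (m j) → Matrix (Fin 2) (Fin 2) ℂ)
    (hK : ∀ j, ∑ i, (K j i)ᴴ * K j i = 1) {ρ : QMat ι} (hρ : IsState ρ) :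
    CCM D ι (applyLocalKraus m K ρ) ≤ CCM D ι ρ := by
  by_cases h : Fintype.card ι ≤ 1
  · rw [CCM_of_card_le_one D _ h, CCM_of_card_le_one D _ h]
  rw [CCM_eq_iInf D _ h, CCM_eq_iInf D _ h]
  refine ciInf_mono ⟨0, ?_⟩ fun A => ?_
  · rintro _ ⟨A, rfl⟩
    exact bipartitionCost_nonneg hD (isState_applyLocalKraus m K hK hρ) A.1
  have hA := isState_reduceTo A.1 hρ
  have hAc := isState_reduceTo A.1ᶜ hρ
  unfold bipartitionCost
  rw [reduceTo_applyLocalKraus m K A.1 hK, reduceTo_applyLocalKraus m K A.1ᶜ hK,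
    ← applyLocalKraus_boxProd]
  gcongr _ * ?_ + ?_ + ?_
  · exact hD.contractivity ι m K hK _ _ hρ (isState_boxProd A.1 hA hAc)
  · exact CCM_applyLocalKraus_le hD (fun a : A.1 => m a) (fun a => K a) (fun a => hK a) hA
  · exact CCM_applyLocalKraus_le hD (fun b : ↥A.1ᶜ => m b) (fun b => K b) (fun b => hK b) hAc
termination_by Fintype.card ι
decreasing_by exacts [A.card_lt, A.card_compl_lt]

end Monotonicity

theorem ccm_local_operations_monotone_general
    (D : ∀ (κ : Type) [Fintype κ] [DecidableEq κ], QMat κ → QMat κ → ℝ)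
    (hD : DistanceAxioms D)
    (N : ℕ)
    (m : Fin N → ℕ) (K : ∀ j : Fin N, Fin (m j) → Matrix (Fin 2) (Fin 2) ℂ)
    (hK : ∀ j, ∑ i, (K j i)ᴴ * K j i = 1)
    (ρ : QMat (Fin N)) (hρ : IsState ρ) :
    CCM D (Fin N) (applyLocalKraus m K ρ) ≤ CCM D (Fin N) ρ :=
  CCM_applyLocalKraus_le hD m K hK hρ

/-- Local quantum operations do not increase CCM: for every
`N`-qubit state `ρ` and every local quantum operation `ε = ε¹ ⊗ ⋯ ⊗ εᴺ` (each
`εʲ` given by single-qubit Kraus operators with `∑ i, (Eᵢʲ)† Eᵢʲ = 1`), one has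
`C(ε(ρ)) ≤ C(ρ)`. -/
theorem ccm_local_operations_monotone
    (D : ∀ (κ : Type) [Fintype κ] [DecidableEq κ], QMat κ → QMat κ → ℝ)
    (hD : DistanceAxioms D)
    (N : ℕ) (hN : 1 ≤ N)
    (m : Fin N → ℕ) (K : ∀ j : Fin N, Fin (m j) → Matrix (Fin 2) (Fin 2) ℂ)
    (hK : ∀ j, ∑ i, (K j i)ᴴ * K j i = 1)
    (ρ : QMat (Fin N)) (hρ : IsState ρ) :
    CCM D (Fin N) (applyLocalKraus m K ρ) ≤ CCM D (Fin N) ρ :=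
  ccm_local_operations_monotone_general D hD N m K hK ρ hρ
end

section
/- CCM of reduced GHZ-diagonal states: fix d ≥ 0 and suppose that for every M with 2 ≤ M, and every bipartition (A,B) of the M qubits, D(τ_M, (τ_M)_A ⊠ (τ_M)_B) = d. Then for every M ≥ 1, C(τ_M) = F(d, M), where F is defined as in the context. -/
open scoped BigOperators ComplexOrder Matrix

/-- The GHZ state vector on qubits indexed by `ι`: value `1/√2` at the all-zeros
and all-ones functions, and `0` elsewhere. -/
noncomputable def ghzVec (ι : Type) [Fintype ι] [DecidableEq ι] : (ι → Fin 2) → ℂ :=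
  fun x => if x = (fun _ => 0) ∨ x = (fun _ => 1) then ((Real.sqrt 2 : ℂ))⁻¹ else 0

/-- The GHZ projector `|GHZ⟩⟨GHZ|`. -/
noncomputable def ghzProj (ι : Type) [Fintype ι] [DecidableEq ι] : QMat ι :=
  fun x y => ghzVec ι x * star (ghzVec ι y)

/-- The GHZ-diagonal state `τ = ½(e₀e₀† + e₁e₁†)`: the diagonal matrix with
entries `½` at the all-zeros and all-ones indices and `0` elsewhere. -/
noncomputable def tau (ι : Type) [Fintype ι] [DecidableEq ι] : QMat ι :=
  fun x y =>
    (if x = (fun _ => 0) ∧ y = (fun _ => 0) then ((2 : ℂ))⁻¹ else 0) +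
    (if x = (fun _ => 1) ∧ y = (fun _ => 1) then ((2 : ℂ))⁻¹ else 0)
/-- The GHZ recursion value `F(x, n)` with fixed parameter `d`:
`F(x,1) = 0`, `F(x,2) = x`, `F(x,3) = 2x + d`,
`F(x,N) = 2^(N−2)·x + 2·F(d, N/2)` for even `N ≥ 4`, and
`F(x,N) = 2^(N−2)·x + F(d, (N−1)/2) + F(d, (N+1)/2)` for odd `N ≥ 5`. -/
noncomputable def F (d : ℝ) (x : ℝ) (n : ℕ) : ℝ :=
  if n ≤ 1 then 0
  else if n = 2 then x
  else if n = 3 then 2 * x + d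
  else if n % 2 = 0 then (2 : ℝ) ^ (n - 2) * x + 2 * F d d (n / 2)
  else (2 : ℝ) ^ (n - 2) * x + F d d ((n - 1) / 2) + F d d ((n + 1) / 2)
termination_by n
decreasing_by
  · omega
  · omega
  · omega

/-!
Every partial trace of `τ` is again a `τ` on fewer qubits, so by induction the cut `(A, B)`
of `N` qubits costs `2^(N-2) d + F(d, |A|) + F(d, N - |A|)`. The increments of `n ↦ F(d, n)`
satisfy `Δ(n) = 2^(n-2) d + Δ(⌊n/2⌋)`, which for `d ≥ 0` makes `F(d, ·)` convex on `n ≥ 1`;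
hence the balanced cut `|A| = ⌊N/2⌋` is optimal, and its cost is the recursion defining `F`.
-/

section F

variable {d : ℝ} {n : ℕ}

lemma F_of_le_one (hn : n ≤ 1) : F d d n = 0 := by
  rw [F, if_pos hn]

lemma F_two : F d d 2 = d := by
  rw [F]; norm_num

-- For `n ≥ 2` the even and odd branches of `F` are one recursion over `⌊n/2⌋`, `⌈n/2⌉`.
lemma F_of_two_le (hn : 2 ≤ n) :
    F d d n = 2 ^ (n - 2) * d + F d d (n / 2) + F d d ((n + 1) / 2) := by
  rcases (by omega : n = 2 ∨ n = 3 ∨ 4 ≤ n) with rfl | rfl | hn4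
  · rw [F_two, F_of_le_one le_rfl]; norm_num
  · rw [F, F_two, F_of_le_one le_rfl]; norm_num
  · rw [F, if_neg (by omega), if_neg (by omega), if_neg (by omega)]
    by_cases hev : n % 2 = 0
    · rw [if_pos hev, show (n + 1) / 2 = n / 2 by omega]
      ring
    · rw [if_neg hev, show (n - 1) / 2 = n / 2 by omega]

lemma F_succ_sub_F (hn : 2 ≤ n) :
    F d d (n + 1) - F d d n = 2 ^ (n - 2) * d + (F d d (n / 2 + 1) - F d d (n / 2)) := by
  rw [F_of_two_le (by omega : 2 ≤ n + 1), F_of_two_le hn,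
    show (n + 1 + 1) / 2 = n / 2 + 1 by omega, show n + 1 - 2 = n - 2 + 1 by omega, pow_succ]
  ring

lemma F_succ_sub_F_le (hd : 0 ≤ d) (hn : 1 ≤ n) :
    F d d (n + 1) - F d d n ≤ F d d (n + 2) - F d d (n + 1) := by
  induction n using Nat.strong_induction_on with
  | _ n ih =>
    obtain rfl | hn2 := (by omega : n = 1 ∨ 2 ≤ n)
    · rw [F_succ_sub_F le_rfl, F_two, F_of_le_one le_rfl]
      norm_num
      linarith
    · rw [F_succ_sub_F hn2, F_succ_sub_F (by omega : 2 ≤ n + 1)]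
      have hhalf : F d d (n / 2 + 1) - F d d (n / 2) ≤
          F d d ((n + 1) / 2 + 1) - F d d ((n + 1) / 2) := by
        obtain h | h := (by omega : (n + 1) / 2 = n / 2 ∨ (n + 1) / 2 = n / 2 + 1)
        · rw [h]
        · rw [h]; exact ih (n / 2) (by omega) (by omega)
      have hpow : (2 : ℝ) ^ (n - 2) * d ≤ 2 ^ (n + 1 - 2) * d :=
        mul_le_mul_of_nonneg_right (pow_le_pow_right₀ one_le_two (by omega)) hd
      linarith

lemma monotoneOn_F_succ_sub_F (hd : 0 ≤ d) :
    MonotoneOn (fun n => F d d (n + 1) - F d d n) (Set.Ici 1) :=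
  monotoneOn_of_le_add_one Set.ordConnected_Ici fun _ _ hm _ => F_succ_sub_F_le hd hm

lemma F_add_F_sub_le_of_le_half (hd : 0 ≤ d) {k : ℕ} (hk : 1 ≤ k) (hkn : k ≤ n / 2) :
    F d d (n / 2) + F d d (n - n / 2) ≤ F d d k + F d d (n - k) := by
  have hanti : AntitoneOn (fun j => F d d j + F d d (n - j)) (Set.Icc 1 (n / 2)) := by
    refine antitoneOn_of_add_one_le Set.ordConnected_Icc fun j _ hjI hj1I => ?_
    have hj : 1 ≤ j ∧ j + 1 ≤ n / 2 := ⟨hjI.1, hj1I.2⟩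
    have hΔ := monotoneOn_F_succ_sub_F hd (Set.mem_Ici.mpr hj.1)
      (Set.mem_Ici.mpr (by omega : 1 ≤ n - (j + 1))) (by omega : j ≤ n - (j + 1))
    simp only [show n - (j + 1) + 1 = n - j by omega] at hΔ
    linarith
  exact hanti ⟨hk, hkn⟩ ⟨by omega, le_rfl⟩ hkn

lemma F_half_add_F_le (hd : 0 ≤ d) {k : ℕ} (hk : 1 ≤ k) (hkn : k < n) :
    F d d (n / 2) + F d d ((n + 1) / 2) ≤ F d d k + F d d (n - k) := by
  rw [show (n + 1) / 2 = n - n / 2 by omega]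
  rcases le_or_gt k (n / 2) with h | h
  · exact F_add_F_sub_le_of_le_half hd hk h
  · have := F_add_F_sub_le_of_le_half hd (by omega : 1 ≤ n - k) (by omega : n - k ≤ n / 2)
    rwa [Nat.sub_sub_self hkn.le, add_comm (F d d (n - k))] at this

end F

section CCM

variable (D : ∀ (κ : Type) [Fintype κ] [DecidableEq κ], QMat κ → QMat κ → ℝ)
  {ι : Type} [Fintype ι] [DecidableEq ι]

noncomputable def splitCost (ρ : QMat ι) (A : Finset ι) : ℝ :=
  (2 : ℝ) ^ (Fintype.card ι - 2) * D ι ρ (boxProd A (reduceTo A ρ) (reduceTo Aᶜ ρ)) +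
    CCM D {x // x ∈ A} (reduceTo A ρ) + CCM D {x // x ∈ Aᶜ} (reduceTo Aᶜ ρ)

lemma CCM_eq_sInf (ρ : QMat ι) (hι : 2 ≤ Fintype.card ι) :
    CCM D ι ρ = sInf (Set.range fun A : {A : Finset ι // A.Nonempty ∧ Aᶜ.Nonempty} =>
      splitCost D ρ A.1) := by
  rw [CCM, if_neg (by omega)]
  congr 1
  ext r
  exact exists_congr fun _ => eq_comm

lemma CCM_eq_of_isMinOn (ρ : QMat ι) (hι : 2 ≤ Fintype.card ι) {A : Finset ι}
    (hA : A.Nonempty ∧ Aᶜ.Nonempty)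
    (hmin : IsMinOn (splitCost D ρ) {B | B.Nonempty ∧ Bᶜ.Nonempty} A) :
    CCM D ι ρ = splitCost D ρ A := by
  rw [CCM_eq_sInf D ρ hι]
  refine IsLeast.csInf_eq ⟨⟨⟨A, hA⟩, rfl⟩, ?_⟩
  rintro _ ⟨B, rfl⟩
  exact hmin B.2

end CCM

section Tau

variable {ι : Type} [Fintype ι] [DecidableEq ι]

lemma glue_eq_const_iff (A : Finset ι) (u : {x // x ∈ A} → Fin 2)
    (w : {x // x ∈ Aᶜ} → Fin 2) (b : Fin 2) :
    glue A u w = (fun _ => b) ↔ u = (fun _ => b) ∧ w = (fun _ => b) := by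
  simp only [funext_iff, glue, Subtype.forall, Finset.mem_compl]
  refine ⟨fun h => ⟨fun x hx => by simpa [hx] using h x, fun x hx => by simpa [hx] using h x⟩,
    fun ⟨hu, hw⟩ x => ?_⟩
  by_cases hx : x ∈ A <;> simp [hx, hu, hw]

lemma reduceTo_tau (A : Finset ι) : reduceTo A (tau ι) = tau {x // x ∈ A} := by
  ext u v
  simp [reduceTo, tau, glue_eq_const_iff, Finset.sum_add_distrib, ite_and]

end Tau

section TauCCM

variable (D : ∀ (κ : Type) [Fintype κ] [DecidableEq κ], QMat κ → QMat κ → ℝ) {d : ℝ}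

lemma splitCost_tau {ι : Type} [Fintype ι] [DecidableEq ι] {A : Finset ι}
    (hA : A.Nonempty ∧ Aᶜ.Nonempty)
    (hD : D ι (tau ι) (boxProd A (reduceTo A (tau ι)) (reduceTo Aᶜ (tau ι))) = d)
    (hCCM : ∀ (κ : Type) [Fintype κ] [DecidableEq κ],
      Fintype.card κ < Fintype.card ι → CCM D κ (tau κ) = F d d (Fintype.card κ)) :
    splitCost D (tau ι) A = 2 ^ (Fintype.card ι - 2) * d + F d d A.card +
      F d d (Fintype.card ι - A.card) := by
  have hcard := Finset.card_compl A
  have := hA.1.card_pos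
  have := hA.2.card_pos
  rw [splitCost, hD, reduceTo_tau, reduceTo_tau, hCCM _ (by rw [Fintype.card_coe]; omega),
    hCCM _ (by rw [Fintype.card_coe]; omega), Fintype.card_coe, Fintype.card_coe, hcard]

theorem CCM_tau (hd : 0 ≤ d)
    (hτ : ∀ (ι : Type) [Fintype ι] [DecidableEq ι], 2 ≤ Fintype.card ι →
      ∀ A : Finset ι, A.Nonempty → Aᶜ.Nonempty →
        D ι (tau ι) (boxProd A (reduceTo A (tau ι)) (reduceTo Aᶜ (tau ι))) = d)
    (ι : Type) [Fintype ι] [DecidableEq ι] :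
    CCM D ι (tau ι) = F d d (Fintype.card ι) := by
  induction hn : Fintype.card ι using Nat.strong_induction_on generalizing ι with
  | _ n ih =>
  obtain hn1 | hn2 := le_or_gt n 1
  · rw [CCM, if_pos (hn ▸ hn1), F_of_le_one hn1]
  have hcost : ∀ B : Finset ι, B.Nonempty ∧ Bᶜ.Nonempty →
      splitCost D (tau ι) B = 2 ^ (n - 2) * d + F d d B.card + F d d (n - B.card) :=
    fun B hB => hn ▸ splitCost_tau D hB (hτ ι (by omega) B hB.1 hB.2)
      fun κ _ _ hκ => ih _ (hn ▸ hκ) κ rfl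
  obtain ⟨A, -, hAcard⟩ := Finset.exists_subset_card_eq (s := (Finset.univ : Finset ι))
    (n := n / 2) (by rw [Finset.card_univ]; omega)
  have hA : A.Nonempty ∧ Aᶜ.Nonempty :=
    ⟨Finset.card_pos.mp (by omega), Finset.card_pos.mp (by rw [Finset.card_compl]; omega)⟩
  have hmin : IsMinOn (splitCost D (tau ι)) {B | B.Nonempty ∧ Bᶜ.Nonempty} A := by
    refine isMinOn_iff.mpr fun B hB => ?_
    have hBcard := hB.2.card_pos
    rw [Finset.card_compl] at hBcard
    rw [hcost A hA, hcost B hB, hAcard, show n - n / 2 = (n + 1) / 2 by omega]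
    have := F_half_add_F_le hd hB.1.card_pos (by omega : B.card < n)
    linarith
  rw [CCM_eq_of_isMinOn D _ (by omega) hA hmin, hcost A hA, F_of_two_le hn2, hAcard,
    show n - n / 2 = (n + 1) / 2 by omega]

end TauCCM

theorem ccm_tau_eq_F_general
    (D : ∀ (κ : Type) [Fintype κ] [DecidableEq κ], QMat κ → QMat κ → ℝ)
    (d : ℝ) (hd : 0 ≤ d)
    (hτ : ∀ (ι : Type) [Fintype ι] [DecidableEq ι], 2 ≤ Fintype.card ι →
      ∀ A : Finset ι, A.Nonempty → Aᶜ.Nonempty →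
        D ι (tau ι) (boxProd A (reduceTo A (tau ι)) (reduceTo Aᶜ (tau ι))) = d)
    (M : ℕ) :
    CCM D (Fin M) (tau (Fin M)) = F d d M := by
  rw [CCM_tau D hd hτ, Fintype.card_fin]

/-- CCM of reduced GHZ-diagonal states: fix `d ≥ 0` and suppose
that for every system of `M ≥ 2` qubits and every bipartition `(A,B)`,
`D(τ_M, (τ_M)_A ⊠ (τ_M)_B) = d`. Then for every `M ≥ 1`, `C(τ_M) = F(d, M)`. -/
theorem ccm_tau_eq_F
    (D : ∀ (κ : Type) [Fintype κ] [DecidableEq κ], QMat κ → QMat κ → ℝ)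
    (d : ℝ) (hd : 0 ≤ d)
    (hτ : ∀ (ι : Type) [Fintype ι] [DecidableEq ι], 2 ≤ Fintype.card ι →
      ∀ A : Finset ι, A.Nonempty → Aᶜ.Nonempty →
        D ι (tau ι) (boxProd A (reduceTo A (tau ι)) (reduceTo Aᶜ (tau ι))) = d)
    (M : ℕ) (hM : 1 ≤ M) :
    CCM D (Fin M) (tau (Fin M)) = F d d M :=
  ccm_tau_eq_F_general D d hd hτ M
end
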